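/- The twisted character is the t = −1 specialization of the Hall–Littlewood polynomial: for a strict partition λ with k parts, Σ_{ω∈S_k} ω·( x_1^{λ_1}⋯x_k^{λ_k} · ∏_{1≤i<j≤k} (x_i + x_j)/(x_i − x_j) ) = s_{λ−δ}(x_1,…,x_k)·s_δ(x_1,…,x_k), as an identity of rational functions in x_1,…,x_k (the permutation ω acting by permuting the variables). -/

import Mathlib

/-!
Each summand factors as `sgn ω · x^{ω λ} · ∏_{i<j} (x_i + x_j) / a_δ`: the product of the sums
`x_i + x_j` is symmetric, while the Vandermonde product `a_δ = ∏_{i<j} (x_i - x_j)` changes sign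
under `ω`. Hence the left-hand side is `a_λ · ∏_{i<j} (x_i + x_j) / a_δ`. Since `λ = (λ - δ) + δ`
we have `a_λ / a_δ = s_{λ-δ}`, and `∏_{i<j} (x_i + x_j) = ∏_{i<j} (x_i² - x_j²) / a_δ = a_{2δ} / a_δ`
is `s_δ`.
-/

open MvPolynomial

/-- The alternant `det(x_i^{μ_j})_{i,j} = Σ_ω sgn(ω) Π_j x_{ω(j)}^{μ_j}`. -/
noncomputable def alt (k : ℕ) (μ : Fin k → ℕ) : MvPolynomial (Fin k) ℤ :=
  ∑ ω : Equiv.Perm (Fin k), (Equiv.Perm.sign ω : ℤ) • ∏ j : Fin k, (X (ω j)) ^ (μ j)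

/-- `p` is the Schur polynomial `s_λ(x_1, …, x_k)`, characterized by
`p · det(x_i^{k-j}) = det(x_i^{λ_j + k - j})`. -/
def IsSchur (k : ℕ) (lam : Fin k → ℕ) (p : MvPolynomial (Fin k) ℤ) : Prop :=
  p * alt k (fun i => k - 1 - (i : ℕ)) = alt k (fun j => lam j + (k - 1 - (j : ℕ)))

noncomputable abbrev ι (k : ℕ) :
    MvPolynomial (Fin k) ℤ →+* FractionRing (MvPolynomial (Fin k) ℤ) :=
  algebraMap (MvPolynomial (Fin k) ℤ) (FractionRing (MvPolynomial (Fin k) ℤ))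

open Finset Equiv Matrix

abbrev ltPairs (k : ℕ) : Finset (Fin k × Fin k) :=
  univ.filter fun pr => pr.1 < pr.2

lemma prod_ltPairs_eq_prod_Ioi {M : Type*} [CommMonoid M] {k : ℕ} (g : Fin k → Fin k → M) :
    ∏ pr ∈ ltPairs k, g pr.1 pr.2 = ∏ i, ∏ j ∈ Ioi i, g i j := by
  rw [ltPairs, prod_filter, Fintype.prod_prod_type]
  simp [prod_ite, filter_lt_eq_Ioi]

lemma prod_ltPairs_comp_perm_of_symm {M : Type*} [CommMonoid M] {k : ℕ} (g : Fin k → Fin k → M)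
    (hg : ∀ a b, g a b = g b a) (ω : Perm (Fin k)) :
    ∏ pr ∈ ltPairs k, g (ω pr.1) (ω pr.2) = ∏ pr ∈ ltPairs k, g pr.1 pr.2 := by
  let sort (σ : Perm (Fin k)) (pr : Fin k × Fin k) : Fin k × Fin k :=
    if σ pr.1 < σ pr.2 then (σ pr.1, σ pr.2) else (σ pr.2, σ pr.1)
  have sort_mem (σ : Perm (Fin k)) (pr) (h : pr ∈ ltPairs k) : sort σ pr ∈ ltPairs k := by
    simp only [mem_filter, mem_univ, true_and, sort] at h ⊢
    split_ifs with hσ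
    · exact hσ
    · exact lt_of_le_of_ne (not_lt.1 hσ) (σ.injective.ne h.ne')
  have sort_sort (σ : Perm (Fin k)) (pr) (h : pr ∈ ltPairs k) : sort σ⁻¹ (sort σ pr) = pr := by
    obtain ⟨a, b⟩ := pr
    simp only [mem_filter, mem_univ, true_and, sort] at h ⊢
    split_ifs <;> simp_all [lt_asymm h]
  refine prod_nbij' (sort ω) (sort ω⁻¹) (sort_mem ω) (sort_mem ω⁻¹) (sort_sort ω)
    (fun pr h => by simpa using sort_sort ω⁻¹ pr h) fun pr _ => ?_
  simp only [sort]
  split_ifs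
  · rfl
  · exact hg _ _

section Alternant

variable {R : Type*} [CommRing R] {k : ℕ}

def alternant (f : Fin k → R) (μ : Fin k → ℕ) : R :=
  (of fun i j => f i ^ μ j).det

lemma alternant_eq_sum (f : Fin k → R) (μ : Fin k → ℕ) :
    alternant f μ = ∑ ω : Perm (Fin k), (Perm.sign ω : R) * ∏ j, f (ω j) ^ μ j := by
  simp [alternant, det_apply, Units.smul_def, zsmul_eq_mul]

lemma map_alt (φ : MvPolynomial (Fin k) ℤ →+* R) (μ : Fin k → ℕ) :
    φ (alt k μ) = alternant (fun i => φ (X i)) μ := by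
  simp [alt, alternant_eq_sum, zsmul_eq_mul]

lemma alternant_comp_perm (f : Fin k → R) (ω : Perm (Fin k)) (μ : Fin k → ℕ) :
    alternant (f ∘ ω) μ = Perm.sign ω * alternant f μ :=
  det_permute ω (of fun i j => f i ^ μ j)

lemma alternant_staircase (f : Fin k → R) :
    alternant f (fun j => k - 1 - (j : ℕ)) = ∏ pr ∈ ltPairs k, (f pr.1 - f pr.2) := by
  have h : (of fun i (j : Fin k) => f i ^ (k - 1 - (j : ℕ))) = projVandermonde 1 f := by
    ext i j
    simp only [of_apply, projVandermonde, rectVandermonde, Pi.one_apply, one_pow, one_mul,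
      Fin.val_rev]
    congr 1
    omega
  rw [alternant, h, det_projVandermonde, prod_ltPairs_eq_prod_Ioi fun i j => f i - f j]
  simp

lemma prod_ltPairs_sub_comp_perm (f : Fin k → R) (ω : Perm (Fin k)) :
    ∏ pr ∈ ltPairs k, (f (ω pr.1) - f (ω pr.2)) =
      Perm.sign ω * ∏ pr ∈ ltPairs k, (f pr.1 - f pr.2) := by
  have h := alternant_comp_perm f ω fun j => k - 1 - (j : ℕ)
  rwa [alternant_staircase, alternant_staircase] at h

lemma alternant_staircase_add_staircase (f : Fin k → R) :
    alternant f (fun j => (k - 1 - (j : ℕ)) + (k - 1 - (j : ℕ))) =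
      alternant f (fun j => k - 1 - (j : ℕ)) * ∏ pr ∈ ltPairs k, (f pr.1 + f pr.2) := by
  calc alternant f (fun j => (k - 1 - (j : ℕ)) + (k - 1 - (j : ℕ)))
      = alternant (fun i => f i * f i) (fun j => k - 1 - (j : ℕ)) := by
        simp only [alternant, pow_add, mul_pow]
    _ = _ := by
        rw [alternant_staircase, alternant_staircase, ← prod_mul_distrib]
        exact prod_congr rfl fun _ _ => by ring

end Alternant

lemma staircase_le_of_strictAnti {k : ℕ} {lam : Fin k → ℕ} (h : StrictAnti lam) (j : Fin k) :
    k - 1 - (j : ℕ) ≤ lam j := by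
  induction hd : k - 1 - (j : ℕ) generalizing j with
  | zero => exact Nat.zero_le _
  | succ d ih =>
    have hj : (j : ℕ) + 1 < k := by omega
    have h_next := ih ⟨j + 1, hj⟩ (by simp only; omega)
    have h_lt := h (show j < ⟨j + 1, hj⟩ from Fin.lt_def.2 (Nat.lt_succ_self _))
    omega

-- No injectivity is needed: if `y` is not injective, both sides are `0` (division by `0`).
lemma sum_perm_mul_prod_ltPairs_div {F : Type*} [Field F] {k : ℕ} (y : Fin k → F)
    (lam : Fin k → ℕ) :
    ∑ ω : Perm (Fin k), (∏ i, y (ω i) ^ lam i) *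
        ∏ pr ∈ ltPairs k, ((y (ω pr.1) + y (ω pr.2)) / (y (ω pr.1) - y (ω pr.2))) =
      alternant y lam * (∏ pr ∈ ltPairs k, (y pr.1 + y pr.2)) /
        alternant y (fun j => k - 1 - (j : ℕ)) := by
  have summand (ω : Perm (Fin k)) :
      ∏ pr ∈ ltPairs k, ((y (ω pr.1) + y (ω pr.2)) / (y (ω pr.1) - y (ω pr.2))) =
        Perm.sign ω * ((∏ pr ∈ ltPairs k, (y pr.1 + y pr.2)) /
          ∏ pr ∈ ltPairs k, (y pr.1 - y pr.2)) := by
    rw [prod_div_distrib, prod_ltPairs_sub_comp_perm,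
      prod_ltPairs_comp_perm_of_symm (fun a b => y a + y b) (fun a b => add_comm _ _) ω]
    rcases Int.units_eq_one_or (Perm.sign ω) with h | h <;> simp [h, div_neg]
  rw [alternant_eq_sum, alternant_staircase, mul_div_assoc, sum_mul]
  exact sum_congr rfl fun ω _ => by rw [summand]; ring

/-- The twisted character is the `t = -1` specialization of the Hall–Littlewood
polynomial: for a strict partition `λ` with `k` parts,
`Σ_{ω ∈ S_k} ω·( x^λ Π_{i<j} (x_i + x_j)/(x_i - x_j) ) = s_{λ-δ} · s_δ`,
as an identity of rational functions in `x_1, …, x_k` (the left-hand side is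
`R_λ(x; -1)`; for strict `λ` the normalizing factor `v_λ(-1)` is `1`). -/
theorem hall_littlewood_minus_one_eq_twisted_character (k : ℕ) (lam : Fin k → ℕ)
    (hstrict : ∀ i j : Fin k, i < j → lam j < lam i)
    (p q : MvPolynomial (Fin k) ℤ)
    (hp : IsSchur k (fun i => lam i - (k - 1 - (i : ℕ))) p)
    (hq : IsSchur k (fun i => k - 1 - (i : ℕ)) q) :
    (∑ ω : Equiv.Perm (Fin k),
        (∏ i : Fin k, (ι k (X (ω i))) ^ (lam i)) *
          ∏ pr ∈ Finset.univ.filter (fun pr : Fin k × Fin k => pr.1 < pr.2),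
            ((ι k (X (ω pr.1)) + ι k (X (ω pr.2))) /
              (ι k (X (ω pr.1)) - ι k (X (ω pr.2))))) =
      ι k p * ι k q := by
  set y : Fin k → FractionRing (MvPolynomial (Fin k) ℤ) := fun i => ι k (X i)
  have hy : Function.Injective y := (IsFractionRing.injective _ _).comp X_injective
  have hD : alternant y (fun j => k - 1 - (j : ℕ)) ≠ 0 := by
    rw [alternant_staircase]
    exact prod_ne_zero_iff.2 fun pr h => sub_ne_zero.2 (hy.ne (mem_filter.1 h).2.ne)
  have hlam : (fun j : Fin k => lam j - (k - 1 - (j : ℕ)) + (k - 1 - (j : ℕ))) = lam :=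
    funext fun j => Nat.sub_add_cancel (staircase_le_of_strictAnti hstrict j)
  have hp_alt : ι k p * alternant y (fun j => k - 1 - (j : ℕ)) = alternant y lam := by
    have h := congrArg (ι k) hp
    rwa [map_mul, map_alt, map_alt, hlam] at h
  have hq_prod : ι k q = ∏ pr ∈ ltPairs k, (y pr.1 + y pr.2) := by
    have h := congrArg (ι k) hq
    rw [map_mul, map_alt, map_alt, alternant_staircase_add_staircase, mul_comm] at h
    exact mul_left_cancel₀ hD h
  refine (sum_perm_mul_prod_ltPairs_div y lam).trans ?_
  rw [← hp_alt, hq_prod]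
  field_simp
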